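/- arXiv:2501.04572 — 5 statements merged into one kernel-verified Lean document; each statement's English description precedes it below -/
import Mathlib

section
/- Let {b_t} be a sequence of nonnegative reals indexed by positive integers. Then for every positive integer T, ∑_{t=1}^T b_t / √(∑_{τ=1}^t b_τ) ≤ 2√(∑_{t=1}^T b_t), where terms with zero denominator are interpreted as 0. -/
lemma aux_step (S c : ℝ) (hS : 0 ≤ S) (hc : 0 ≤ c) (hpos : 0 < S + c) :
    c / Real.sqrt (S + c) ≤ 2 * (Real.sqrt (S + c) - Real.sqrt S) := by
  have hsp : 0 < Real.sqrt (S + c) := Real.sqrt_pos.mpr hpos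
  rw [div_le_iff₀ hsp]
  have hmul : Real.sqrt S * Real.sqrt (S + c) = Real.sqrt (S * (S + c)) :=
    (Real.sqrt_mul hS _).symm
  have hamgm : Real.sqrt (S * (S + c)) ≤ (S + (S + c)) / 2 := by
    rw [show (S + (S + c)) / 2 = Real.sqrt (((S + (S + c)) / 2) ^ 2) from
      (Real.sqrt_sq (by linarith)).symm]
    apply Real.sqrt_le_sqrt
    nlinarith [sq_nonneg (S - (S + c))]
  have hsq : Real.sqrt (S + c) * Real.sqrt (S + c) = S + c :=
    Real.mul_self_sqrt hpos.le
  nlinarith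
theorem sum_div_sqrt_partial_sum_le (b : ℕ → ℝ) (hb : ∀ t, 0 ≤ b t) (T : ℕ) (hT : 1 ≤ T) :
    ∑ t ∈ Finset.Icc 1 T,
        (if (∑ τ ∈ Finset.Icc 1 t, b τ) = 0 then 0
         else b t / Real.sqrt (∑ τ ∈ Finset.Icc 1 t, b τ))
      ≤ 2 * Real.sqrt (∑ t ∈ Finset.Icc 1 T, b t) := by
  induction T with
  | zero => omega
  | succ T ih =>
    have hsumnn : ∀ n, 0 ≤ ∑ τ ∈ Finset.Icc 1 n, b τ :=
      fun n => Finset.sum_nonneg fun i _ => hb i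
    rcases Nat.eq_or_lt_of_le hT with h1 | h1
    · -- T + 1 = 1
      rw [← h1]
      simp only [Finset.Icc_self, Finset.sum_singleton]
      split_ifs with h
      · positivity
      · have hpos : 0 < b 1 := lt_of_le_of_ne (hb 1) (Ne.symm h)
        rw [div_le_iff₀ (Real.sqrt_pos.mpr hpos)]
        nlinarith [Real.mul_self_sqrt (hb 1), Real.sqrt_pos.mpr hpos]
    · have hT' : 1 ≤ T := by omega
      rw [Finset.sum_Icc_succ_top (by omega), Finset.sum_Icc_succ_top (by omega : 1 ≤ T + 1)]
      have key : (if ((∑ τ ∈ Finset.Icc 1 T, b τ) + b (T+1)) = 0 then 0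
          else b (T+1) / Real.sqrt ((∑ τ ∈ Finset.Icc 1 T, b τ) + b (T+1)))
          ≤ 2 * (Real.sqrt ((∑ τ ∈ Finset.Icc 1 T, b τ) + b (T+1))
              - Real.sqrt (∑ τ ∈ Finset.Icc 1 T, b τ)) := by
        split_ifs with h
        · have h0 : (∑ τ ∈ Finset.Icc 1 T, b τ) = 0 := by
            have := hsumnn T; have := hb (T+1); linarith
          rw [h0] at h ⊢
          simp [h]
        · exact aux_step _ _ (hsumnn T) (hb (T+1))
            (lt_of_le_of_ne (by have := hsumnn T; have := hb (T+1); linarith) (Ne.symm h))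
      have := ih hT'
      linarith
end

section
/- Let {a_t} be a sequence of reals with |a_t| ≤ D for all t, where D > 0. Then for every positive integer T, ∑_{t=1}^T a_t² / √(∑_{τ=1}^t a_τ²) ≤ 2D√T, with terms of zero denominator interpreted as 0. -/
lemma key_step (S S' x : ℝ) (hx : 0 ≤ x) (hS' : 0 ≤ S') (h : S = S' + x) :
    (if S = 0 then 0 else x / Real.sqrt S) ≤ 2 * (Real.sqrt S - Real.sqrt S') := by
  by_cases hS0 : S = 0
  · simp only [hS0, if_pos rfl]
    have hS'0 : S' = 0 := by nlinarith
    simp [hS'0]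
  · rw [if_neg hS0]
    have hSpos : 0 < S := lt_of_le_of_ne (by nlinarith) (Ne.symm hS0)
    have hsq : 0 < Real.sqrt S := Real.sqrt_pos.mpr hSpos
    rw [div_le_iff₀ hsq]
    have hSS : Real.sqrt S' * Real.sqrt S ≤ (S' + S) / 2 := by
      nlinarith [Real.sq_sqrt hSpos.le, Real.sq_sqrt hS', Real.sqrt_nonneg S,
        Real.sqrt_nonneg S', sq_nonneg (Real.sqrt S - Real.sqrt S')]
    nlinarith [Real.sq_sqrt hSpos.le]

lemma telescope (a : ℕ → ℝ) : ∀ T, 1 ≤ T →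
    ∑ t ∈ Finset.Icc 1 T,
        (if (∑ τ ∈ Finset.Icc 1 t, (a τ) ^ 2) = 0 then 0
         else (a t) ^ 2 / Real.sqrt (∑ τ ∈ Finset.Icc 1 t, (a τ) ^ 2))
      ≤ 2 * Real.sqrt (∑ τ ∈ Finset.Icc 1 T, (a τ) ^ 2) := by
  intro T hT
  induction T with
  | zero => omega
  | succ n ih =>
    by_cases hn : 1 ≤ n
    · rw [Finset.sum_Icc_succ_top (by omega : 1 ≤ n + 1)]
      have hkey := key_step (∑ τ ∈ Finset.Icc 1 (n+1), (a τ)^2)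
        (∑ τ ∈ Finset.Icc 1 n, (a τ)^2) ((a (n+1))^2) (sq_nonneg _)
        (Finset.sum_nonneg fun i _ => sq_nonneg _)
        (by rw [Finset.sum_Icc_succ_top (by omega : 1 ≤ n + 1)])
      have := ih hn
      linarith
    · interval_cases n
      simp only [Finset.Icc_self, Finset.sum_singleton]
      split
      · positivity
      · rename_i h
        have hpos : 0 < (a 1)^2 := lt_of_le_of_ne (sq_nonneg _) (Ne.symm h)
        rw [div_le_iff₀ (Real.sqrt_pos.mpr hpos)]
        nlinarith [Real.sq_sqrt hpos.le]

theorem sum_sq_div_sqrt_partial_sum_le (a : ℕ → ℝ) (D : ℝ) (hD : 0 < D)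
    (ha : ∀ t, 1 ≤ t → |a t| ≤ D) (T : ℕ) (hT : 1 ≤ T) :
    ∑ t ∈ Finset.Icc 1 T,
        (if (∑ τ ∈ Finset.Icc 1 t, (a τ) ^ 2) = 0 then 0
         else (a t) ^ 2 / Real.sqrt (∑ τ ∈ Finset.Icc 1 t, (a τ) ^ 2))
      ≤ 2 * D * Real.sqrt T := by
  have h1 := telescope a T hT
  have hS : (∑ τ ∈ Finset.Icc 1 T, (a τ) ^ 2) ≤ T * D ^ 2 := by
    calc (∑ τ ∈ Finset.Icc 1 T, (a τ) ^ 2) ≤ ∑ τ ∈ Finset.Icc 1 T, D ^ 2 := by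
          apply Finset.sum_le_sum
          intro i hi
          have := ha i (Finset.mem_Icc.mp hi).1
          nlinarith [abs_nonneg (a i), sq_abs (a i)]
      _ = T * D ^ 2 := by
          rw [Finset.sum_const, Nat.card_Icc]
          simp [nsmul_eq_mul]
  have h2 : Real.sqrt (∑ τ ∈ Finset.Icc 1 T, (a τ) ^ 2) ≤ D * Real.sqrt T := by
    have : Real.sqrt (∑ τ ∈ Finset.Icc 1 T, (a τ) ^ 2) ≤ Real.sqrt (T * D ^ 2) :=
      Real.sqrt_le_sqrt hS
    rw [Real.sqrt_mul (by positivity), Real.sqrt_sq hD.le] at this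
    linarith [this]
  linarith
end

section
/- Let Θ ⊆ ℝⁿ be a nonempty closed convex set with diameter at most D, let ℓ_t : ℝⁿ → ℝ for t = 1,…,T be convex differentiable functions whose gradients satisfy ‖∇ℓ_t(θ)‖ ≤ G for all θ. Define iterates θ̂_1 ∈ Θ and θ̂_{t+1} = Proj_Θ(θ̂_t − η_t ∇ℓ_t(θ̂_t)) with η_t = D/(G√t). Then for any θ̄ ∈ Θ, ∑_{t=1}^T (ℓ_t(θ̂_t) − ℓ_t(θ̄)) ≤ (3/2) G D √T. -/
/-!
Convexity bounds the regret of round `t` by `⟪g_t, θ̂_t - θ̄⟫`. Since the projection onto `Θ`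
makes an obtuse angle with every point of `Θ`, it does not increase the distance to `θ̄`, so
`2 η_t ⟪g_t, θ̂_t - θ̄⟫ ≤ ‖θ̂_t - θ̄‖² - ‖θ̂_{t+1} - θ̄‖² + η_t² G²`. Dividing by `2 η_t` and
summing, Abel summation with nonincreasing `η_t` and squared distances in `[0, D²]` bounds the
first part by `D² / (2 η_T) = G D √T / 2`, and `(G² / 2) ∑ η_t ≤ G D √T` because
`∑_{t ≤ T} 1 / √t ≤ 2 √T`.
-/

open Finset RealInnerProductSpace

theorem sum_Icc_mul_sub_succ_le {a r : ℕ → ℝ} {B : ℝ} (ha₁ : 0 ≤ a 1)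
    (ha : ∀ t, 1 ≤ t → a t ≤ a (t + 1)) (hr : ∀ t, 1 ≤ t → r t ≤ B) {T : ℕ} (hT : 1 ≤ T) :
    ∑ t ∈ Icc 1 T, a t * (r t - r (t + 1)) ≤ a T * (B - r (T + 1)) := by
  induction T, hT using Nat.le_induction with
  | base =>
    simp only [Icc_self, sum_singleton]
    nlinarith [mul_nonneg ha₁ (sub_nonneg.2 (hr 1 le_rfl))]
  | succ T hT ih =>
    rw [sum_Icc_succ_top (by omega)]
    nlinarith [mul_nonneg (sub_nonneg.2 (ha T hT)) (sub_nonneg.2 (hr (T + 1) (by omega)))]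

theorem sum_Icc_inv_sqrt_le (T : ℕ) : ∑ t ∈ Icc 1 T, (√(t : ℝ))⁻¹ ≤ 2 * √(T : ℝ) := by
  induction T with
  | zero => simp
  | succ T ih =>
    rw [sum_Icc_succ_top (by omega), Nat.cast_succ]
    have hT : √(T : ℝ) ^ 2 = T := Real.sq_sqrt T.cast_nonneg
    have hT1 : √((T : ℝ) + 1) ^ 2 = T + 1 := Real.sq_sqrt (by positivity)
    have hpos : 0 < √((T : ℝ) + 1) := Real.sqrt_pos.2 (by positivity)
    have hlast : (√((T : ℝ) + 1))⁻¹ ≤ 2 * (√((T : ℝ) + 1) - √(T : ℝ)) := by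
      rw [inv_le_iff_one_le_mul₀ hpos]
      nlinarith [sq_nonneg (√((T : ℝ) + 1) - √(T : ℝ))]
    linarith

section InnerProductSpace

variable {F : Type*} [NormedAddCommGroup F] [InnerProductSpace ℝ F]

theorem ConvexOn.hasFDerivAt_apply_sub_le {f : F → ℝ} {f' : F →L[ℝ] ℝ} {x : F}
    (hf : ConvexOn ℝ Set.univ f) (hf' : HasFDerivAt f f' x) (y : F) :
    f' (y - x) ≤ f y - f x := by
  have hline : ConvexOn ℝ Set.univ (f ∘ AffineMap.lineMap (k := ℝ) x y) := hf.comp_affineMap _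
  have hderiv : HasDerivAt (f ∘ AffineMap.lineMap (k := ℝ) x y) (f' (y - x)) 0 := by
    refine HasFDerivAt.comp_hasDerivAt (0 : ℝ) ?_ AffineMap.hasDerivAt_lineMap
    simpa using hf'
  simpa [slope_def_field] using
    hline.le_slope_of_hasDerivAt (Set.mem_univ 0) (Set.mem_univ 1) one_pos hderiv

theorem ConvexOn.sub_le_inner_gradient [CompleteSpace F] {f : F → ℝ} {g x : F}
    (hf : ConvexOn ℝ Set.univ f) (hg : HasGradientAt f g x) (y : F) :
    f x - f y ≤ ⟪g, x - y⟫ := by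
  have h := hf.hasFDerivAt_apply_sub_le hg.hasFDerivAt y
  rw [InnerProductSpace.toDual_apply_apply, ← neg_sub x y, inner_neg_right] at h
  linarith

variable {K : Set F} {u v w : F}

theorem real_inner_sub_le_zero_of_forall_norm_sub_le (hK : Convex ℝ K) (hv : v ∈ K)
    (hmin : ∀ z ∈ K, ‖u - v‖ ≤ ‖u - z‖) (hw : w ∈ K) : ⟪u - v, w - v⟫ ≤ 0 := by
  have : Nonempty ↥K := ⟨⟨v, hv⟩⟩
  refine (norm_eq_iInf_iff_real_inner_le_zero hK hv).mp (le_antisymm ?_ ?_) w hw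
  · exact le_ciInf fun z => hmin z z.2
  · exact ciInf_le ⟨0, Set.forall_mem_range.2 fun _ => norm_nonneg _⟩ (⟨v, hv⟩ : K)

theorem norm_sub_le_of_forall_norm_sub_le (hK : Convex ℝ K) (hv : v ∈ K)
    (hmin : ∀ z ∈ K, ‖u - v‖ ≤ ‖u - z‖) (hw : w ∈ K) : ‖v - w‖ ≤ ‖u - w‖ := by
  have hinner := real_inner_sub_le_zero_of_forall_norm_sub_le hK hv hmin hw
  have hexpand : ‖u - w‖ ^ 2 = ‖u - v‖ ^ 2 - 2 * ⟪u - v, w - v⟫ + ‖v - w‖ ^ 2 := by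
    rw [← sub_add_sub_cancel u v w, norm_add_sq_real, ← neg_sub w v, inner_neg_right]
    ring
  refine (pow_le_pow_iff_left₀ (norm_nonneg _) (norm_nonneg _) two_ne_zero).mp ?_
  nlinarith [sq_nonneg ‖u - v‖]

theorem two_mul_inner_le_of_projected_step (hK : Convex ℝ K) {x y g : F} (η : ℝ)
    (hv : v ∈ K) (hmin : ∀ z ∈ K, ‖x - η • g - v‖ ≤ ‖x - η • g - z‖) (hy : y ∈ K) :
    2 * η * ⟪g, x - y⟫ ≤ ‖x - y‖ ^ 2 - ‖v - y‖ ^ 2 + η ^ 2 * ‖g‖ ^ 2 := by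
  have hproj := pow_le_pow_left₀ (norm_nonneg _)
    (norm_sub_le_of_forall_norm_sub_le hK hv hmin hy) 2
  have hexpand : ‖x - η • g - y‖ ^ 2 = ‖x - y‖ ^ 2 - 2 * η * ⟪g, x - y⟫ + η ^ 2 * ‖g‖ ^ 2 := by
    rw [sub_right_comm, norm_sub_sq_real, real_inner_smul_right, real_inner_comm, norm_smul,
      mul_pow, Real.norm_eq_abs, sq_abs]
    ring
  linarith

theorem sum_inner_sub_le_of_projected_gradient_steps (hK : Convex ℝ K) {P : F → F}
    (hPmem : ∀ z, P z ∈ K) (hPproj : ∀ z, ∀ w ∈ K, ‖z - P z‖ ≤ ‖z - w‖)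
    {η : ℕ → ℝ} (hη : ∀ t, 1 ≤ t → 0 < η t) (hη_anti : ∀ t, 1 ≤ t → η (t + 1) ≤ η t)
    {x g : ℕ → F} (hx : ∀ t, 1 ≤ t → x (t + 1) = P (x t - η t • g t))
    {y : F} (hy : y ∈ K) {D G : ℝ} (hD : ∀ t, 1 ≤ t → ‖x t - y‖ ≤ D) (hG : ∀ t, ‖g t‖ ≤ G)
    {T : ℕ} (hT : 1 ≤ T) :
    ∑ t ∈ Icc 1 T, ⟪g t, x t - y⟫ ≤ D ^ 2 / (2 * η T) + G ^ 2 / 2 * ∑ t ∈ Icc 1 T, η t := by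
  set r : ℕ → ℝ := fun t => ‖x t - y‖ ^ 2
  have hround : ∀ t ∈ Icc 1 T,
      ⟪g t, x t - y⟫ ≤ (2 * η t)⁻¹ * (r t - r (t + 1)) + G ^ 2 / 2 * η t := by
    intro t ht
    have ht₁ := (mem_Icc.1 ht).1
    have hstep :=
      two_mul_inner_le_of_projected_step hK (x := x t) (g := g t) (η t) (hPmem _) (hPproj _) hy
    rw [← hx t ht₁] at hstep
    have hg : ‖g t‖ ^ 2 ≤ G ^ 2 := pow_le_pow_left₀ (norm_nonneg _) (hG t) 2
    have hηt := hη t ht₁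
    rw [inv_mul_eq_div, div_add' _ _ _ (by positivity), le_div_iff₀ (by positivity)]
    nlinarith
  have htelescope := sum_Icc_mul_sub_succ_le (a := fun t => (2 * η t)⁻¹) (r := r) (B := D ^ 2)
    (by have := hη 1 le_rfl; positivity)
    (fun t ht => inv_anti₀ (by linarith [hη (t + 1) (by omega)]) (by linarith [hη_anti t ht]))
    (fun t ht => pow_le_pow_left₀ (norm_nonneg _) (hD t ht) 2) hT
  have hηT := hη T hT
  calc ∑ t ∈ Icc 1 T, ⟪g t, x t - y⟫
      ≤ ∑ t ∈ Icc 1 T, ((2 * η t)⁻¹ * (r t - r (t + 1)) + G ^ 2 / 2 * η t) := sum_le_sum hround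
    _ = ∑ t ∈ Icc 1 T, (2 * η t)⁻¹ * (r t - r (t + 1)) + G ^ 2 / 2 * ∑ t ∈ Icc 1 T, η t := by
      rw [sum_add_distrib, mul_sum]
    _ ≤ D ^ 2 / (2 * η T) + G ^ 2 / 2 * ∑ t ∈ Icc 1 T, η t := by
      have hdrop : (2 * η T)⁻¹ * (D ^ 2 - r (T + 1)) ≤ D ^ 2 / (2 * η T) := by
        have : 0 ≤ (2 * η T)⁻¹ * r (T + 1) := by positivity
        rw [div_eq_inv_mul, mul_sub]
        linarith
      linarith

end InnerProductSpace

theorem ogd_regret_bound_general (n T : ℕ) (hT : 1 ≤ T)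
    (Θ : Set (EuclideanSpace ℝ (Fin n)))
    (hconvΘ : Convex ℝ Θ) (D G : ℝ) (hD : 0 < D) (hG : 0 < G)
    (hdiam : ∀ x ∈ Θ, ∀ y ∈ Θ, ‖x - y‖ ≤ D)
    (ℓ : ℕ → EuclideanSpace ℝ (Fin n) → ℝ)
    (g : ℕ → EuclideanSpace ℝ (Fin n) → EuclideanSpace ℝ (Fin n))
    (hgrad : ∀ t θ, HasGradientAt (ℓ t) (g t θ) θ)
    (hconvℓ : ∀ t, ConvexOn ℝ Set.univ (ℓ t))
    (hGbd : ∀ t θ, ‖g t θ‖ ≤ G)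
    (P : EuclideanSpace ℝ (Fin n) → EuclideanSpace ℝ (Fin n))
    (hPmem : ∀ z, P z ∈ Θ)
    (hPproj : ∀ z, ∀ y ∈ Θ, ‖z - P z‖ ≤ ‖z - y‖)
    (θh : ℕ → EuclideanSpace ℝ (Fin n)) (hinit : θh 1 ∈ Θ)
    (hstep : ∀ t, 1 ≤ t → θh (t + 1) = P (θh t - (D / (G * Real.sqrt t)) • g t (θh t))) :
    ∀ θbar ∈ Θ,
      ∑ t ∈ Finset.Icc 1 T, (ℓ t (θh t) - ℓ t θbar) ≤ (3 / 2) * G * D * Real.sqrt T := by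
  intro θbar hθbar
  have hmem : ∀ t, 1 ≤ t → θh t ∈ Θ :=
    Nat.le_induction hinit fun t ht _ => hstep t ht ▸ hPmem _
  have hη : ∀ t : ℕ, 1 ≤ t → 0 < D / (G * √(t : ℝ)) := fun t ht => by
    have : (0 : ℝ) < t := Nat.cast_pos.2 ht
    positivity
  have hη_anti : ∀ t : ℕ, 1 ≤ t → D / (G * √((t + 1 : ℕ) : ℝ)) ≤ D / (G * √(t : ℝ)) := by
    intro t ht
    have : (0 : ℝ) < t := Nat.cast_pos.2 ht
    gcongr
    omega
  have hregret := sum_inner_sub_le_of_projected_gradient_steps hconvΘ hPmem hPproj hη hη_anti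
    hstep hθbar (fun t ht => hdiam _ (hmem t ht) _ hθbar) (fun t => hGbd t (θh t)) hT
  calc ∑ t ∈ Icc 1 T, (ℓ t (θh t) - ℓ t θbar)
      ≤ ∑ t ∈ Icc 1 T, ⟪g t (θh t), θh t - θbar⟫ :=
        sum_le_sum fun t _ => (hconvℓ t).sub_le_inner_gradient (hgrad t _) θbar
    _ ≤ D ^ 2 / (2 * (D / (G * √(T : ℝ)))) + G ^ 2 / 2 * ∑ t ∈ Icc 1 T, D / (G * √(t : ℝ)) :=
        hregret
    _ = G * D * √(T : ℝ) / 2 + G * D / 2 * ∑ t ∈ Icc 1 T, (√(t : ℝ))⁻¹ := by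
        rw [mul_sum, mul_sum]
        congr 1
        · field_simp
        · refine sum_congr rfl fun t _ => ?_
          field_simp
    _ ≤ G * D * √(T : ℝ) / 2 + G * D / 2 * (2 * √(T : ℝ)) := by
        gcongr
        exact sum_Icc_inv_sqrt_le T
    _ = 3 / 2 * G * D * √(T : ℝ) := by ring

/-- Regret bound for projected online gradient descent with learning rate
`η_t = D/(G√t)` on convex functions with gradients bounded by `G`, over a
closed convex set `Θ` of diameter at most `D`. -/
theorem ogd_regret_bound (n T : ℕ) (hT : 1 ≤ T)
    (Θ : Set (EuclideanSpace ℝ (Fin n))) (hne : Θ.Nonempty) (hcl : IsClosed Θ)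
    (hconvΘ : Convex ℝ Θ) (D G : ℝ) (hD : 0 < D) (hG : 0 < G)
    (hdiam : ∀ x ∈ Θ, ∀ y ∈ Θ, ‖x - y‖ ≤ D)
    (ℓ : ℕ → EuclideanSpace ℝ (Fin n) → ℝ)
    (g : ℕ → EuclideanSpace ℝ (Fin n) → EuclideanSpace ℝ (Fin n))
    (hgrad : ∀ t θ, HasGradientAt (ℓ t) (g t θ) θ)
    (hconvℓ : ∀ t, ConvexOn ℝ Set.univ (ℓ t))
    (hGbd : ∀ t θ, ‖g t θ‖ ≤ G)
    (P : EuclideanSpace ℝ (Fin n) → EuclideanSpace ℝ (Fin n))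
    (hPmem : ∀ z, P z ∈ Θ)
    (hPproj : ∀ z, ∀ y ∈ Θ, ‖z - P z‖ ≤ ‖z - y‖)
    (θh : ℕ → EuclideanSpace ℝ (Fin n)) (hinit : θh 1 ∈ Θ)
    (hstep : ∀ t, 1 ≤ t → θh (t + 1) = P (θh t - (D / (G * Real.sqrt t)) • g t (θh t))) :
    ∀ θbar ∈ Θ,
      ∑ t ∈ Finset.Icc 1 T, (ℓ t (θh t) - ℓ t θbar) ≤ (3 / 2) * G * D * Real.sqrt T :=
  ogd_regret_bound_general n T hT Θ hconvΘ D G hD hG hdiam ℓ g hgrad hconvℓ hGbd P hPmem hPproj θh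
    hinit hstep
end

section
/- Under the same online regression setup (y_t = θ*ᵀ x_t, ŷ_t = θ̂_tᵀ x_t, e_t = ŷ_t − y_t, update θ̂_{t+1} = θ̂_t − (α_t/(m + x_tᵀx_t)) e_t x_t) with m > 0, and constants 0 < α_low ≤ α_t ≤ α_high < 2, and with ‖x_t‖ ≤ X for all t, the error is square-summable: ∑_{t=1}^∞ e_t² ≤ c · ‖θ̂_1 − θ*‖² where c = (m + X²)/(α_low(2 − α_high)). -/
/-!
With `V t = ‖θ̂ t - θ*‖²`, one update decreases `V` by exactly
`α (2 - α ‖x‖² / (m + ‖x‖²)) e² / (m + ‖x‖²)`, and the step-size bounds together with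
`‖x‖ ≤ X` bound this gain from below by `e² / c`. Hence `e t ² ≤ c (V t - V (t + 1))`,
and the partial sums of `e²` telescope to at most `c V 1`.
-/

open RealInnerProductSpace

theorem tsum_le_mul_of_le_mul_sub_succ {f V : ℕ → ℝ} {c : ℝ} (hf : ∀ t, 0 ≤ f t)
    (hV : ∀ t, 0 ≤ V t) (hc : 0 ≤ c) (h : ∀ t, f t ≤ c * (V t - V (t + 1))) :
    ∑' t, f t ≤ c * V 0 := by
  refine Real.tsum_le_of_sum_range_le hf fun N => ?_
  calc ∑ t ∈ Finset.range N, f t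
      ≤ ∑ t ∈ Finset.range N, c * (V t - V (t + 1)) := Finset.sum_le_sum fun t _ => h t
    _ = c * (V 0 - V N) := by rw [← Finset.mul_sum, Finset.sum_range_sub']
    _ ≤ c * V 0 := by nlinarith [hV N]

noncomputable def normalizedStepGain (a m s : ℝ) : ℝ := a * (2 - a * s / (m + s)) / (m + s)

theorem div_le_normalizedStepGain {a m s X αlow αhigh : ℝ} (hm : 0 < m) (hs : 0 ≤ s)
    (hsX : s ≤ X ^ 2) (hαlow : 0 < αlow) (hlow : αlow ≤ a) (hhigh : a ≤ αhigh)
    (hαhigh : αhigh < 2) :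
    αlow * (2 - αhigh) / (m + X ^ 2) ≤ normalizedStepGain a m s := by
  have hms : 0 < m + s := by linarith
  have hratio : a * s / (m + s) ≤ αhigh := by
    rw [div_le_iff₀ hms]
    nlinarith
  calc αlow * (2 - αhigh) / (m + X ^ 2)
      = αlow / (m + X ^ 2) * (2 - αhigh) := by ring
    _ ≤ a / (m + s) * (2 - a * s / (m + s)) :=
        mul_le_mul (div_le_div₀ (by linarith) hlow hms (by linarith)) (by linarith)
          (by linarith) (div_nonneg (by linarith) hms.le)
    _ = normalizedStepGain a m s := by rw [normalizedStepGain]; ring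

section NormalizedGradientStep

variable {E : Type*} [NormedAddCommGroup E] [InnerProductSpace ℝ E]

noncomputable def normalizedGradientStep (a m : ℝ) (θstar x θ : E) : E :=
  θ - (a / (m + ‖x‖ ^ 2)) • (⟪θ - θstar, x⟫ • x)

theorem norm_sub_sq_normalizedGradientStep (θ θstar x : E) (a m : ℝ) :
    ‖normalizedGradientStep a m θstar x θ - θstar‖ ^ 2
      = ‖θ - θstar‖ ^ 2 - normalizedStepGain a m (‖x‖ ^ 2) * ⟪θ - θstar, x⟫ ^ 2 := by
  have hshift : normalizedGradientStep a m θstar x θ - θstar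
      = (θ - θstar) - (a / (m + ‖x‖ ^ 2) * ⟪θ - θstar, x⟫) • x := by
    rw [normalizedGradientStep, smul_smul]
    abel
  rw [hshift, norm_sub_sq_real, real_inner_smul_right, norm_smul, mul_pow, Real.norm_eq_abs,
    sq_abs, normalizedStepGain]
  ring

theorem sq_inner_le_mul_sub_norm_sq_normalizedGradientStep (θ θstar x : E)
    {a m X αlow αhigh : ℝ} (hm : 0 < m) (hx : ‖x‖ ≤ X) (hαlow : 0 < αlow) (hlow : αlow ≤ a)
    (hhigh : a ≤ αhigh) (hαhigh : αhigh < 2) :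
    ⟪θ - θstar, x⟫ ^ 2 ≤ (m + X ^ 2) / (αlow * (2 - αhigh)) *
      (‖θ - θstar‖ ^ 2 - ‖normalizedGradientStep a m θstar x θ - θstar‖ ^ 2) := by
  have hgain := div_le_normalizedStepGain hm (sq_nonneg ‖x‖)
    (pow_le_pow_left₀ (norm_nonneg x) hx 2) hαlow hlow hhigh hαhigh
  have h2αhigh : 2 - αhigh ≠ 0 := by linarith
  rw [norm_sub_sq_normalizedGradientStep, sub_sub_cancel]
  calc ⟪θ - θstar, x⟫ ^ 2
      = (m + X ^ 2) / (αlow * (2 - αhigh)) *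
          (αlow * (2 - αhigh) / (m + X ^ 2) * ⟪θ - θstar, x⟫ ^ 2) := by
        field_simp
    _ ≤ _ := by gcongr

end NormalizedGradientStep

/-- Square-summability of the prediction error in online regression with
normalized gradient descent. -/
theorem online_regression_error_square_summable (n : ℕ)
    (θstar : EuclideanSpace ℝ (Fin n)) (θh x : ℕ → EuclideanSpace ℝ (Fin n))
    (α : ℕ → ℝ) (m X αlow αhigh : ℝ) (hm : 0 < m)
    (hαlow : 0 < αlow) (hαhigh : αhigh < 2)
    (hα : ∀ t, αlow ≤ α t ∧ α t ≤ αhigh)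
    (hx : ∀ t, ‖x t‖ ≤ X)
    (e : ℕ → ℝ) (he : ∀ t, e t = ⟪θh t - θstar, x t⟫)
    (hupd : ∀ t, θh (t + 1) = θh t - (α t / (m + ‖x t‖ ^ 2)) • (e t • x t)) :
    ∑' t : ℕ, (e (t + 1)) ^ 2
      ≤ ((m + X ^ 2) / (αlow * (2 - αhigh))) * ‖θh 1 - θstar‖ ^ 2 := by
  have hc : 0 ≤ (m + X ^ 2) / (αlow * (2 - αhigh)) :=
    div_nonneg (by positivity) (mul_pos hαlow (by linarith)).le
  have hdecrease : ∀ t, e t ^ 2 ≤ (m + X ^ 2) / (αlow * (2 - αhigh)) *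
      (‖θh t - θstar‖ ^ 2 - ‖θh (t + 1) - θstar‖ ^ 2) := fun t => by
    rw [hupd t, he t]
    exact sq_inner_le_mul_sub_norm_sq_normalizedGradientStep _ _ _ hm (hx t) hαlow
      (hα t).1 (hα t).2 hαhigh
  exact tsum_le_mul_of_le_mul_sub_succ (V := fun t => ‖θh (t + 1) - θstar‖ ^ 2)
    (fun t => sq_nonneg _) (fun t => sq_nonneg _) hc fun t => hdecrease (t + 1)
end

section
/- Under the online regression setup with gradient descent update θ̂_{t+1} = θ̂_t − (α_t/(m + x_tᵀx_t)) e_t x_t, m > 0, α_t ∈ [α_low, α_high] ⊂ (0, 2), and ‖x_t‖ ≤ X for all t, the prediction error converges to zero: lim_{t→∞} e_t = 0, i.e., lim_{t→∞} ŷ_t = y_t. -/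
open RealInnerProductSpace Filter

/-- The prediction error of normalized-gradient-descent online regression
converges to zero. -/
theorem online_regression_error_tendsto_zero (n : ℕ)
    (θstar : EuclideanSpace ℝ (Fin n)) (θh x : ℕ → EuclideanSpace ℝ (Fin n))
    (α : ℕ → ℝ) (m X αlow αhigh : ℝ) (hm : 0 < m) (hX : 0 < X)
    (hαlow : 0 < αlow) (hαhigh : αhigh < 2)
    (hα : ∀ t, αlow ≤ α t ∧ α t ≤ αhigh)
    (hx : ∀ t, ‖x t‖ ≤ X)
    (e : ℕ → ℝ) (he : ∀ t, e t = ⟪θh t - θstar, x t⟫)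
    (hupd : ∀ t, θh (t + 1) = θh t - (α t / (m + ‖x t‖ ^ 2)) • (e t • x t)) :
    Tendsto e atTop (nhds 0) := by
  set d : ℕ → EuclideanSpace ℝ (Fin n) := fun t => θh t - θstar with hd
  have hden : ∀ t, (0:ℝ) < m + ‖x t‖ ^ 2 := fun t => by positivity
  have hX2 : (0:ℝ) < m + X ^ 2 := by positivity
  set c : ℝ := αlow * (2 - αhigh) / (m + X ^ 2) with hc
  have hcpos : 0 < c := div_pos (mul_pos hαlow (by linarith)) hX2
  have key : ∀ t, ‖d (t + 1)‖ ^ 2 ≤ ‖d t‖ ^ 2 - c * e t ^ 2 := by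
    intro t
    set γ : ℝ := α t / (m + ‖x t‖ ^ 2) with hγ
    have hγpos : 0 < γ := div_pos (lt_of_lt_of_le hαlow (hα t).1) (hden t)
    have hde : d (t + 1) = d t - γ • (e t • x t) := by
      simp only [hd, hupd t, hγ]
      abel
    have hexp : ‖d (t + 1)‖ ^ 2
        = ‖d t‖ ^ 2 - e t ^ 2 * (2 * γ - γ ^ 2 * ‖x t‖ ^ 2) := by
      rw [hde, norm_sub_sq_real]
      have h1 : ⟪d t, γ • (e t • x t)⟫ = γ * (e t * ⟪d t, x t⟫) := by
        simp [inner_smul_right]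
      have h2 : ‖γ • (e t • x t)‖ ^ 2 = γ ^ 2 * (e t ^ 2 * ‖x t‖ ^ 2) := by
        simp [norm_smul, mul_pow, sq_abs]
      rw [h1, h2, ← he t]
      ring
    rw [hexp]
    have hxb : ‖x t‖ ^ 2 ≤ X ^ 2 := by
      have := hx t
      have h0 := norm_nonneg (x t)
      nlinarith
    have hγx : γ * ‖x t‖ ^ 2 ≤ αhigh := by
      have h1 : γ * ‖x t‖ ^ 2 ≤ α t := by
        rw [hγ, div_mul_eq_mul_div, div_le_iff₀ (hden t)]
        have h0 := norm_nonneg (x t)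
        have ha := (hα t).1
        nlinarith
      linarith [(hα t).2]
    have hγlow : αlow / (m + X ^ 2) ≤ γ := by
      rw [hγ]
      apply div_le_div₀ (le_trans hαlow.le (hα t).1) (hα t).1 (hden t)
      nlinarith [hxb]
    have hmain : c ≤ 2 * γ - γ ^ 2 * ‖x t‖ ^ 2 := by
      have h1 : γ * (2 - αhigh) ≤ γ * (2 - γ * ‖x t‖ ^ 2) := by
        apply mul_le_mul_of_nonneg_left _ hγpos.le
        linarith
      have h2 : c ≤ γ * (2 - αhigh) := by
        have h3 := mul_le_mul_of_nonneg_right hγlow (by linarith : (0:ℝ) ≤ 2 - αhigh)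
        calc c = (αlow / (m + X ^ 2)) * (2 - αhigh) := by rw [hc]; ring
          _ ≤ γ * (2 - αhigh) := h3
      nlinarith
    nlinarith [sq_nonneg (e t)]
  have hsum : ∀ N, ∑ t ∈ Finset.range N, c * e t ^ 2 ≤ ‖d 0‖ ^ 2 := by
    intro N
    have : ∀ N, ∑ t ∈ Finset.range N, c * e t ^ 2 ≤ ‖d 0‖ ^ 2 - ‖d N‖ ^ 2 := by
      intro N
      induction N with
      | zero => simp
      | succ k ih =>
        rw [Finset.sum_range_succ]
        have := key k
        linarith
    have := this N
    nlinarith [sq_nonneg (‖d N‖)]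
  have hsummable : Summable (fun t => c * e t ^ 2) := by
    apply summable_of_sum_range_le (fun t => by positivity) hsum
  have hsum2 : Summable (fun t => e t ^ 2) := by
    have := hsummable.div_const c
    simpa [mul_div_cancel_left₀ _ (ne_of_gt hcpos)] using this
  have hsq : Tendsto (fun t => e t ^ 2) atTop (nhds 0) := hsum2.tendsto_atTop_zero
  have habs : Tendsto (fun t => |e t|) atTop (nhds 0) := by
    have : Tendsto (fun t => Real.sqrt (e t ^ 2)) atTop (nhds (Real.sqrt 0)) :=
      (Real.continuous_sqrt.continuousAt).tendsto.comp hsq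
    simpa [Real.sqrt_sq_eq_abs] using this
  exact tendsto_zero_iff_norm_tendsto_zero.mpr (by simpa [Real.norm_eq_abs] using habs)
end
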